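/- Minor-place elimination preserves behavior up to rooted strong bisimulation: let N be a typed Petri net with identifiers with initial marking m₀ such that m₀(p) = m₀(q) = ∅ for places p, q where p is minor to q, and let N' be obtained from N by deleting place p and all its incident arcs. Then the induced transition systems of (N, m₀) and (N', m₀ restricted to the places of N') are rooted strongly bisimilar; a witnessing bisimulation is the relation Q where (m, m') ∈ Q iff m(r) = m'(r) for all places r ≠ p, and m(p)(id) = m'(q)(id) restricted appropriately with |m(p)| = |m'(q)|. -/
import Mathlib


open scoped Classical

noncomputable section

/-- A typed Petri net with identifiers (t-PNID) over place carrier `P` and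
transition carrier `T`.  Following the standing assumptions for typed Jackson
Nets, type labels and variables are identified (a bijection between variables
and types is assumed) and are represented by natural numbers, and arc
inscriptions, being multisets of variable vectors without multiplicities, are
represented by finite sets of variables/type labels. -/
structure Net (P T : Type) where
  places : Finset P
  trans : Finset T
  arcPT : Finset (P × T)
  arcTP : Finset (T × P)
  /-- place typing function (a place type is a set of type labels) -/
  α : P → Finset ℕ
  /-- inscription of the arc `(p,t)` -/
  βin : P × T → Finset ℕ
  /-- inscription of the arc `(t,p)` -/
  βout : T × P → Finset ℕ

variable {P T : Type}

namespace Net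

def preT (N : Net P T) (t : T) : Finset P := N.places.filter (fun p => (p, t) ∈ N.arcPT)
def postT (N : Net P T) (t : T) : Finset P := N.places.filter (fun p => (t, p) ∈ N.arcTP)
def preP (N : Net P T) (p : P) : Finset T := N.trans.filter (fun t => (t, p) ∈ N.arcTP)
def postP (N : Net P T) (p : P) : Finset T := N.trans.filter (fun t => (p, t) ∈ N.arcPT)

/-- The identifier types occurring in (place types of) `N`. -/
def typesOf (N : Net P T) : Finset ℕ := N.places.biUnion N.α

/-- Input variables of `t`. -/
def invarT (N : Net P T) (t : T) : Finset ℕ := (N.preT t).biUnion (fun p => N.βin (p, t))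
/-- Output variables of `t`. -/
def outvarT (N : Net P T) (t : T) : Finset ℕ := (N.postT t).biUnion (fun p => N.βout (t, p))
/-- Variables of `t`. -/
def varT (N : Net P T) (t : T) : Finset ℕ := N.invarT t ∪ N.outvarT t
/-- Emitting variables of `t`. -/
def newvarT (N : Net P T) (t : T) : Finset ℕ := N.outvarT t \ N.invarT t
/-- Collecting variables of `t`. -/
def delvarT (N : Net P T) (t : T) : Finset ℕ := N.invarT t \ N.outvarT t

/-- R1 (place expansion): replace place `p` by `p₁ ; t₁ ; p₂` (of the same type). -/
def placeExpansion (N : Net P T) (p p₁ p₂ : P) (t₁ : T) : Net P T where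
  places := insert p₁ (insert p₂ (N.places.erase p))
  trans := insert t₁ N.trans
  arcPT := ((N.arcPT.filter (fun a => a.1 ≠ p)) ∪
      (N.arcPT.filter (fun a => a.1 = p)).image (fun a => (p₂, a.2))) ∪ {(p₁, t₁)}
  arcTP := ((N.arcTP.filter (fun a => a.2 ≠ p)) ∪
      (N.arcTP.filter (fun a => a.2 = p)).image (fun a => (a.1, p₁))) ∪ {(t₁, p₂)}
  α := fun q => if q = p₁ ∨ q = p₂ then N.α p else N.α q
  βin := fun a => if a.1 = p₂ then N.βin (p, a.2)
    else if a = (p₁, t₁) then N.α p else N.βin a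
  βout := fun a => if a.2 = p₁ then N.βout (a.1, p)
    else if a = (t₁, p₂) then N.α p else N.βout a

/-- R2 (transition expansion): replace transition `t` by `t₁ ; [p, lam] ; t₂`
with `var(t) ⊆ lam`. -/
def transitionExpansion (N : Net P T) (t t₁ t₂ : T) (p : P) (lam : Finset ℕ) :
    Net P T where
  places := insert p N.places
  trans := insert t₁ (insert t₂ (N.trans.erase t))
  arcPT := ((N.arcPT.filter (fun a => a.2 ≠ t)) ∪
      (N.arcPT.filter (fun a => a.2 = t)).image (fun a => (a.1, t₁))) ∪ {(p, t₂)}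
  arcTP := ((N.arcTP.filter (fun a => a.1 ≠ t)) ∪
      (N.arcTP.filter (fun a => a.1 = t)).image (fun a => (t₂, a.2))) ∪ {(t₁, p)}
  α := fun q => if q = p then lam else N.α q
  βin := fun a => if a.2 = t₁ then N.βin (a.1, t)
    else if a = (p, t₂) then lam else N.βin a
  βout := fun a => if a.1 = t₂ then N.βout (t, a.2)
    else if a = (t₁, p) then lam else N.βout a

/-- R3 (place duplication): duplicate place `p` as a parallel place `p'` of type
`lam'`. -/
def placeDuplication (N : Net P T) (p p' : P) (lam' : Finset ℕ) : Net P T where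
  places := insert p' N.places
  trans := N.trans
  arcPT := N.arcPT ∪ (N.arcPT.filter (fun a => a.1 = p)).image (fun a => (p', a.2))
  arcTP := N.arcTP ∪ (N.arcTP.filter (fun a => a.2 = p)).image (fun a => (a.1, p'))
  α := fun q => if q = p' then lam' else N.α q
  βin := fun a => if a.1 = p' then lam' else N.βin a
  βout := fun a => if a.2 = p' then lam' else N.βout a

/-- R4 (transition duplication): duplicate transition `t` as a choice `t + t'`. -/
def transitionDuplication (N : Net P T) (t t' : T) : Net P T where
  places := N.places
  trans := insert t' N.trans
  arcPT := N.arcPT ∪ (N.arcPT.filter (fun a => a.2 = t)).image (fun a => (a.1, t'))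
  arcTP := N.arcTP ∪ (N.arcTP.filter (fun a => a.1 = t)).image (fun a => (t', a.2))
  α := N.α
  βin := fun a => if a.2 = t' then N.βin (a.1, t) else N.βin a
  βout := fun a => if a.1 = t' then N.βout (t, a.2) else N.βout a

/-- R5 (self-loop addition): add a self-loop transition `t` to place `p`. -/
def selfLoopAddition (N : Net P T) (p : P) (t : T) : Net P T where
  places := N.places
  trans := insert t N.trans
  arcPT := insert (p, t) N.arcPT
  arcTP := insert (t, p) N.arcTP
  α := N.α
  βin := fun a => if a = (p, t) then N.α p else N.βin a
  βout := fun a => if a = (t, p) then N.α p else N.βout a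

/-- R6 (identifier introduction): give transition `t` a self-loop on a fresh
place `p` of a fresh type `lam` (with `lam ∩ var(t) = ∅`), together with an
emitting transition `t₁` and a collecting transition `t₂` for `p`. -/
def identifierIntroduction (N : Net P T) (t : T) (p : P) (t₁ t₂ : T)
    (lam : Finset ℕ) : Net P T where
  places := insert p N.places
  trans := insert t₁ (insert t₂ N.trans)
  arcPT := insert (p, t) (insert (p, t₂) N.arcPT)
  arcTP := insert (t, p) (insert (t₁, p) N.arcTP)
  α := fun q => if q = p then lam else N.α q
  βin := fun a => if a.1 = p then lam else N.βin a
  βout := fun a => if a.2 = p then lam else N.βout a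

end Net

/-- Typed Jackson Nets generated from the set `T'` of transitions by
recursively applying the six generation rules. -/
inductive IsTJNFrom : Finset T → Net P T → Prop
  | base (T' : Finset T) :
      IsTJNFrom T' ⟨∅, T', ∅, ∅, fun _ => ∅, fun _ => ∅, fun _ => ∅⟩
  | placeExp {T' N} (p p₁ p₂ : P) (t₁ : T) :
      IsTJNFrom T' N → p ∈ N.places → p₁ ∉ N.places → p₂ ∉ N.places → p₁ ≠ p₂ →
      t₁ ∉ N.trans → IsTJNFrom T' (N.placeExpansion p p₁ p₂ t₁)
  | transExp {T' N} (t t₁ t₂ : T) (p : P) (lam : Finset ℕ) :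
      IsTJNFrom T' N → t ∈ N.trans → t₁ ∉ N.trans → t₂ ∉ N.trans → t₁ ≠ t₂ →
      p ∉ N.places → N.varT t ⊆ lam →
      IsTJNFrom T' (N.transitionExpansion t t₁ t₂ p lam)
  | placeDup {T' N} (p p' : P) (lam' : Finset ℕ) :
      IsTJNFrom T' N → p ∈ N.places → p' ∉ N.places →
      (∀ t ∈ N.postP p, Disjoint lam' (N.newvarT t)) →
      IsTJNFrom T' (N.placeDuplication p p' lam')
  | transDup {T' N} (t t' : T) :
      IsTJNFrom T' N → t ∈ N.trans → t' ∉ N.trans →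
      IsTJNFrom T' (N.transitionDuplication t t')
  | selfLoop {T' N} (p : P) (t : T) :
      IsTJNFrom T' N → p ∈ N.places → t ∉ N.trans →
      IsTJNFrom T' (N.selfLoopAddition p t)
  | idIntro {T' N} (t : T) (p : P) (t₁ t₂ : T) (lam : Finset ℕ) :
      IsTJNFrom T' N → t ∈ N.trans → p ∉ N.places → t₁ ∉ N.trans → t₂ ∉ N.trans →
      t₁ ≠ t₂ → lam.Nonempty → Disjoint lam (N.varT t) →
      IsTJNFrom T' (N.identifierIntroduction t p t₁ t₂ lam)

/-- `N` is a typed Jackson Net. -/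
def Net.IsTJN (N : Net P T) : Prop := ∃ T' : Finset T, IsTJNFrom T' N

/-- `N` is an atomic typed Jackson Net (generated from a single transition). -/
def Net.AtomicTJN (N : Net P T) : Prop := ∃ t : T, IsTJNFrom {t} N

namespace Net

/-- The type projection of the set `Υ` of types on `N`.  Projected places are
(faithfully renamed as) pairs `(p, Υ)`, so that projections on different type
sets have disjoint place sets. -/
def proj (N : Net P T) (Υ : Finset ℕ) : Net (P × Finset ℕ) T where
  places := (N.places.filter (fun p => Υ ⊆ N.α p)).image (fun p => (p, Υ))
  trans := N.trans.filter (fun t =>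
    ∃ p ∈ N.places, Υ ⊆ N.α p ∧ ((p, t) ∈ N.arcPT ∨ (t, p) ∈ N.arcTP))
  arcPT := (N.arcPT.filter (fun a => a.1 ∈ N.places ∧ Υ ⊆ N.α a.1)).image
    (fun a => ((a.1, Υ), a.2))
  arcTP := (N.arcTP.filter (fun a => a.2 ∈ N.places ∧ Υ ⊆ N.α a.2)).image
    (fun a => (a.1, (a.2, Υ)))
  α := fun q => q.2
  βin := fun a => N.βin (a.1.1, a.2) ∩ a.1.2
  βout := fun a => N.βout (a.1, a.2.1) ∩ a.2.2

/-- Composition of two t-PNIDs: the union of all components. -/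
def compose {Q : Type} (N M : Net Q T) : Net Q T where
  places := N.places ∪ M.places
  trans := N.trans ∪ M.trans
  arcPT := N.arcPT ∪ M.arcPT
  arcTP := N.arcTP ∪ M.arcTP
  α := fun p => N.α p ∪ M.α p
  βin := fun a => N.βin a ∪ M.βin a
  βout := fun a => N.βout a ∪ M.βout a

/-- Composition `⊎` of a finite family of t-PNIDs: the union of all components. -/
def composeFamily {X Q : Type} (S : Finset X) (f : X → Net Q T) : Net Q T where
  places := S.biUnion (fun x => (f x).places)
  trans := S.biUnion (fun x => (f x).trans)
  arcPT := S.biUnion (fun x => (f x).arcPT)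
  arcTP := S.biUnion (fun x => (f x).arcTP)
  α := fun p => S.sup (fun x => (f x).α p)
  βin := fun a => S.sup (fun x => (f x).βin a)
  βout := fun a => S.sup (fun x => (f x).βout a)

/-- The composition `⊎_{∅ ⊂ Υ ⊆ types(N)} π_Υ(N)` of all type projections of
`N` over nonempty subsets of its types. -/
def projAll (N : Net P T) : Net (P × Finset ℕ) T :=
  composeFamily (N.typesOf.powerset.filter (fun Υ => Υ.Nonempty)) (fun Υ => N.proj Υ)

/-! ### Markings and firing semantics -/

/-- A token is an identifier vector, represented (under the variable/type
bijection) as an assignment of identifiers (naturals) to type labels; only the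
components in the type of the containing place are relevant. -/
def tokOf (A : Finset ℕ) (ψ : ℕ → ℕ) : ℕ → ℕ := fun l => if l ∈ A then ψ l else 0

/-- A marking assigns to every place a finite multiset of tokens. -/
abbrev Marking (P : Type) := P → Multiset (ℕ → ℕ)

/-- The empty marking. -/
def emptyMarking : Marking P := fun _ => 0

/-- The identifiers occurring in marking `m` of `N`. -/
def idsOf (N : Net P T) (m : Marking P) : Set ℕ :=
  { i | ∃ p ∈ N.places, ∃ f ∈ m p, ∃ l ∈ N.α p, f l = i }

/-- Firing of transition `t` under binding `ψ` from `m` to `m'`: `ψ` is an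
injective type-respecting valuation, fresh exactly on the emitting variables of
`t`; `t` is enabled, and tokens are consumed/produced according to the arcs. -/
def fire (N : Net P T) (m : Marking P) (t : T) (ψ : ℕ → ℕ) (m' : Marking P) : Prop :=
  t ∈ N.trans ∧ Function.Injective ψ ∧
  (∀ l ∈ N.varT t, (ψ l ∉ N.idsOf m ↔ l ∈ N.newvarT t)) ∧
  (∀ p ∈ N.preT t, tokOf (N.α p) ψ ∈ m p) ∧
  (∀ p ∈ N.places,
    m' p + (if (p, t) ∈ N.arcPT then ({tokOf (N.α p) ψ} : Multiset (ℕ → ℕ)) else 0)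
      = m p + (if (t, p) ∈ N.arcTP then ({tokOf (N.α p) ψ} : Multiset (ℕ → ℕ)) else 0)) ∧
  (∀ p, p ∉ N.places → m' p = m p)

/-- `η` is a firing sequence of `N` from `m` to `m'`. -/
inductive fires (N : Net P T) : Marking P → List (T × (ℕ → ℕ)) → Marking P → Prop
  | nil (m : Marking P) : fires N m [] m
  | cons {m m' m'' : Marking P} {t : T} {ψ : ℕ → ℕ} {η : List (T × (ℕ → ℕ))} :
      N.fire m t ψ m' → fires N m' η m'' → fires N m ((t, ψ) :: η) m''

/-- The markings reachable from `m` in `N`. -/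
def reach (N : Net P T) (m : Marking P) : Set (Marking P) :=
  { m' | ∃ η, N.fires m η m' }

end Net

/-- A labeled transition system. -/
structure LTS (S A : Type) where
  init : S
  step : S → A → S → Prop

/-- The LTS induced by a marked t-PNID: states are markings, labels are pairs
of a transition and a binding. -/
def Net.lts (N : Net P T) (m₀ : Net.Marking P) : LTS (Net.Marking P) (T × (ℕ → ℕ)) :=
  ⟨m₀, fun m a m' => N.fire m a.1 a.2 m'⟩

/-- Strong simulation between LTSs. -/
def IsStrongSim {S₁ S₂ A : Type} (Γ₁ : LTS S₁ A) (Γ₂ : LTS S₂ A)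
    (R : S₁ → S₂ → Prop) : Prop :=
  ∀ p q a p', R p q → Γ₁.step p a p' → ∃ q', Γ₂.step q a q' ∧ R p' q'

/-- Strong bisimulation between LTSs. -/
def IsStrongBisim {S₁ S₂ A : Type} (Γ₁ : LTS S₁ A) (Γ₂ : LTS S₂ A)
    (R : S₁ → S₂ → Prop) : Prop :=
  IsStrongSim Γ₁ Γ₂ R ∧ IsStrongSim Γ₂ Γ₁ (fun q p => R p q)

/-- Rooted strong bisimilarity of LTSs. -/
def RootedStrongBisimilar {S₁ S₂ A : Type} (Γ₁ : LTS S₁ A) (Γ₂ : LTS S₂ A) : Prop :=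
  ∃ R : S₁ → S₂ → Prop, R Γ₁.init Γ₂.init ∧ IsStrongBisim Γ₁ Γ₂ R

/-- Place `p` is minor to place `q` in `N`. -/
def Net.MinorTo (N : Net P T) (p q : P) : Prop :=
  p ∈ N.places ∧ q ∈ N.places ∧ p ≠ q ∧
  N.preP p = N.preP q ∧ N.postP p = N.postP q ∧ N.α p ⊂ N.α q ∧
  (∀ t ∈ N.preP p, N.βout (t, p) = N.βout (t, q) ∩ N.α p) ∧
  (∀ t ∈ N.postP p, N.βin (p, t) = N.βin (q, t) ∩ N.α p)

/-- `N` with place `p` (and its incident arcs) removed. -/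
def Net.erasePlace (N : Net P T) (p : P) : Net P T where
  places := N.places.erase p
  trans := N.trans
  arcPT := N.arcPT.filter (fun a => a.1 ≠ p)
  arcTP := N.arcTP.filter (fun a => a.2 ≠ p)
  α := N.α
  βin := N.βin
  βout := N.βout

section MinorAux

variable {P T : Type}

lemma tok_tok {A B : Finset ℕ} (hAB : A ⊆ B) (ψ : ℕ → ℕ) :
    Net.tokOf A (Net.tokOf B ψ) = Net.tokOf A ψ := by
  funext l
  simp only [Net.tokOf]
  by_cases h : l ∈ A
  · simp [h, hAB h]
  · simp [h]

variable (N : Net P T) (p q : P)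

lemma arcPT_iff (h : N.MinorTo p q) {t : T} (ht : t ∈ N.trans) :
    ((p, t) ∈ N.arcPT ↔ (q, t) ∈ N.arcPT) := by
  have hpost := h.2.2.2.2.1
  have := Finset.ext_iff.mp hpost t
  simpa [Net.postP, Finset.mem_filter, ht] using this

lemma arcTP_iff (h : N.MinorTo p q) {t : T} (ht : t ∈ N.trans) :
    ((t, p) ∈ N.arcTP ↔ (t, q) ∈ N.arcTP) := by
  have hpre := h.2.2.2.1
  have := Finset.ext_iff.mp hpre t
  simpa [Net.preP, Finset.mem_filter, ht] using this

lemma preT_erase (t : T) : (N.erasePlace p).preT t = (N.preT t).erase p := by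
  ext r
  simp only [Net.preT, Net.erasePlace, Finset.mem_filter, Finset.mem_erase]
  tauto

lemma postT_erase (t : T) : (N.erasePlace p).postT t = (N.postT t).erase p := by
  ext r
  simp only [Net.postT, Net.erasePlace, Finset.mem_filter, Finset.mem_erase]
  tauto

lemma invar_eq (h : N.MinorTo p q) {t : T} (ht : t ∈ N.trans) :
    (N.erasePlace p).invarT t = N.invarT t := by
  have hq : q ∈ N.places := h.2.1
  have hne : p ≠ q := h.2.2.1
  apply Finset.Subset.antisymm
  · intro l hl
    simp only [Net.invarT, Finset.mem_biUnion] at hl ⊢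
    obtain ⟨r, hr, hlr⟩ := hl
    rw [preT_erase] at hr
    exact ⟨r, Finset.mem_of_mem_erase hr, hlr⟩
  · intro l hl
    simp only [Net.invarT, Finset.mem_biUnion] at hl ⊢
    obtain ⟨r, hr, hlr⟩ := hl
    by_cases hrp : r = p
    · subst hrp
      have harc : (r, t) ∈ N.arcPT := (Finset.mem_filter.mp hr).2
      have hβ := h.2.2.2.2.2.2.2 t
        (Finset.mem_filter.mpr ⟨ht, harc⟩)
      refine ⟨q, ?_, ?_⟩
      · rw [preT_erase]
        exact Finset.mem_erase.mpr ⟨Ne.symm hne,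
          Finset.mem_filter.mpr ⟨hq, (arcPT_iff N r q h ht).mp harc⟩⟩
      · rw [hβ] at hlr
        exact (Finset.mem_inter.mp hlr).1
    · exact ⟨r, by rw [preT_erase]; exact Finset.mem_erase.mpr ⟨hrp, hr⟩, hlr⟩

lemma outvar_eq (h : N.MinorTo p q) {t : T} (ht : t ∈ N.trans) :
    (N.erasePlace p).outvarT t = N.outvarT t := by
  have hq : q ∈ N.places := h.2.1
  have hne : p ≠ q := h.2.2.1
  apply Finset.Subset.antisymm
  · intro l hl
    simp only [Net.outvarT, Finset.mem_biUnion] at hl ⊢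
    obtain ⟨r, hr, hlr⟩ := hl
    rw [postT_erase] at hr
    exact ⟨r, Finset.mem_of_mem_erase hr, hlr⟩
  · intro l hl
    simp only [Net.outvarT, Finset.mem_biUnion] at hl ⊢
    obtain ⟨r, hr, hlr⟩ := hl
    by_cases hrp : r = p
    · subst hrp
      have harc : (t, r) ∈ N.arcTP := (Finset.mem_filter.mp hr).2
      have hβ := h.2.2.2.2.2.2.1 t
        (Finset.mem_filter.mpr ⟨ht, harc⟩)
      refine ⟨q, ?_, ?_⟩
      · rw [postT_erase]
        exact Finset.mem_erase.mpr ⟨Ne.symm hne,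
          Finset.mem_filter.mpr ⟨hq, (arcTP_iff N r q h ht).mp harc⟩⟩
      · rw [hβ] at hlr
        exact (Finset.mem_inter.mp hlr).1
    · exact ⟨r, by rw [postT_erase]; exact Finset.mem_erase.mpr ⟨hrp, hr⟩, hlr⟩

lemma var_eq (h : N.MinorTo p q) {t : T} (ht : t ∈ N.trans) :
    (N.erasePlace p).varT t = N.varT t := by
  simp only [Net.varT, invar_eq N p q h ht, outvar_eq N p q h ht]

lemma newvar_eq (h : N.MinorTo p q) {t : T} (ht : t ∈ N.trans) :
    (N.erasePlace p).newvarT t = N.newvarT t := by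
  simp only [Net.newvarT, invar_eq N p q h ht, outvar_eq N p q h ht]

lemma idsOf_eq (h : N.MinorTo p q) {m m' : Net.Marking P}
    (h1 : ∀ r, r ≠ p → m r = m' r)
    (h2 : m p = (m' q).map (fun f => Net.tokOf (N.α p) f)) :
    N.idsOf m = (N.erasePlace p).idsOf m' := by
  have hq : q ∈ N.places := h.2.1
  have hne : p ≠ q := h.2.2.1
  have hsub : N.α p ⊆ N.α q := h.2.2.2.2.2.1.1
  ext i
  simp only [Net.idsOf, Net.erasePlace, Set.mem_setOf_eq]
  constructor
  · rintro ⟨r, hr, f, hf, l, hl, hfl⟩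
    by_cases hrp : r = p
    · subst hrp
      rw [h2] at hf
      obtain ⟨g, hg, hgf⟩ := Multiset.mem_map.mp hf
      refine ⟨q, Finset.mem_erase.mpr ⟨Ne.symm hne, hq⟩, g, hg, l, hsub hl, ?_⟩
      rw [← hfl, ← hgf]
      simp [Net.tokOf, hl]
    · exact ⟨r, Finset.mem_erase.mpr ⟨hrp, hr⟩, f, by rw [← h1 r hrp]; exact hf, l, hl, hfl⟩
  · rintro ⟨r, hr, f, hf, l, hl, hfl⟩
    obtain ⟨hrp, hrN⟩ := Finset.mem_erase.mp hr
    exact ⟨r, hrN, f, by rw [h1 r hrp]; exact hf, l, hl, hfl⟩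

end MinorAux

/-- Minor-place elimination preserves behavior up to rooted strong
bisimulation: if `p` is minor to `q` and both are initially empty, then the
induced LTSs of `(N, m₀)` and of `(N', m₀)` (where `N'` deletes `p`) are
rooted strongly bisimilar, witnessed by the relation `Q` relating `m` and `m'`
iff they agree on all places other than `p` and the tokens of `p` in `m` are
exactly the tokens of `q` in `m'` restricted to the type of `p` (in particular
`|m(p)| = |m'(q)|`). -/
theorem minor_place_elimination (N : Net P T) (m₀ : Net.Marking P) (p q : P)
    (hminor : N.MinorTo p q) (hp : m₀ p = 0) (hq : m₀ q = 0) :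
    Q₀ = (fun (m m' : Net.Marking P) =>
        (∀ r, r ≠ p → m r = m' r) ∧
        m p = (m' q).map (fun f => Net.tokOf (N.α p) f) ∧
        (m p).card = (m' q).card) →
    Q₀ m₀ m₀ ∧ IsStrongBisim (N.lts m₀) ((N.erasePlace p).lts m₀) Q₀ := by
  intro hQ
  subst hQ
  have hpP : p ∈ N.places := hminor.1
  have hqP : q ∈ N.places := hminor.2.1
  have hne : p ≠ q := hminor.2.2.1
  have hqp : q ≠ p := Ne.symm hne
  have hsub : N.α p ⊆ N.α q := hminor.2.2.2.2.2.1.1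
  set f : (ℕ → ℕ) → (ℕ → ℕ) := fun g => Net.tokOf (N.α p) g with hf
  refine ⟨⟨fun r _ => rfl, by rw [hp, hq]; simp, by rw [hp, hq]⟩, ?_, ?_⟩
  · -- forward simulation
    rintro m m' a m₁ ⟨hR1, hR2, _⟩ hstep
    obtain ⟨ht, hinj, hfresh, hen, heq, hout⟩ := hstep
    have hPT := arcPT_iff N p q hminor (t := a.1) ht
    have hTP := arcTP_iff N p q hminor (t := a.1) ht
    have hmpq : m p = Multiset.map f (m q) := by rw [hR2, hR1 q hqp]
    have hkey : Multiset.map f (m₁ q)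
          + (if (q, a.1) ∈ N.arcPT then ({Net.tokOf (N.α p) a.2} : Multiset (ℕ → ℕ)) else 0)
        = Multiset.map f (m q)
          + (if (a.1, q) ∈ N.arcTP then ({Net.tokOf (N.α p) a.2} : Multiset (ℕ → ℕ)) else 0) := by
      have h0 := congrArg (Multiset.map f) (heq q hqP)
      simp only [Multiset.map_add, apply_ite (Multiset.map f), Multiset.map_singleton,
        Multiset.map_zero] at h0
      rw [show f (Net.tokOf (N.α q) a.2) = Net.tokOf (N.α p) a.2 from tok_tok hsub a.2] at h0
      exact h0
    have heqp := heq p hpP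
    simp only [hPT, hTP] at heqp
    have h7 : m p + (if (a.1, q) ∈ N.arcTP then ({Net.tokOf (N.α p) a.2} : Multiset (ℕ → ℕ)) else 0)
        = Multiset.map f (m₁ q)
          + (if (q, a.1) ∈ N.arcPT then ({Net.tokOf (N.α p) a.2} : Multiset (ℕ → ℕ)) else 0) := by
      rw [hmpq, ← hkey]
    have hmain : m₁ p = Multiset.map f (m₁ q) := add_right_cancel (heqp.trans h7)
    refine ⟨fun r => if r = p then m' p else m₁ r, ?_, ?_, ?_, ?_⟩
    · -- the fire in N'
      refine ⟨ht, hinj, ?_, ?_, ?_, ?_⟩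
      · intro l hl
        rw [var_eq N p q hminor ht] at hl
        rw [newvar_eq N p q hminor ht, ← idsOf_eq N p q hminor hR1 hR2]
        exact hfresh l hl
      · intro r hr
        rw [preT_erase] at hr
        obtain ⟨hrp, hrN⟩ := Finset.mem_erase.mp hr
        show Net.tokOf (N.α r) a.2 ∈ m' r
        rw [← hR1 r hrp]
        exact hen r hrN
      · intro r hrP
        obtain ⟨hrp, hrN⟩ := Finset.mem_erase.mp hrP
        have e1 : ((r, a.1) ∈ (N.erasePlace p).arcPT) = ((r, a.1) ∈ N.arcPT) := by
          simp [Net.erasePlace, hrp]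
        have e2 : ((a.1, r) ∈ (N.erasePlace p).arcTP) = ((a.1, r) ∈ N.arcTP) := by
          simp [Net.erasePlace, hrp]
        simp only [e1, e2, if_neg hrp]
        rw [← hR1 r hrp]
        exact heq r hrN
      · intro r hr
        by_cases hrpp : r = p
        · simp only [if_pos hrpp]
          rw [hrpp]
        · simp only [if_neg hrpp]
          have hrN : r ∉ N.places := fun hc => hr (Finset.mem_erase.mpr ⟨hrpp, hc⟩)
          rw [hout r hrN, hR1 r hrpp]
    · intro r hrp
      simp only [if_neg hrp]
    · simp only [if_neg hqp]
      exact hmain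
    · simp only [if_neg hqp]
      rw [hmain, Multiset.card_map]
  · -- backward simulation
    rintro m' m a m₁' ⟨hR1, hR2, _⟩ hstep
    obtain ⟨ht, hinj, hfresh, hen, heq, hout⟩ := hstep
    have ht' : a.1 ∈ N.trans := ht
    have hPT := arcPT_iff N p q hminor (t := a.1) ht'
    have hTP := arcTP_iff N p q hminor (t := a.1) ht'
    have hmpq : m p = Multiset.map f (m' q) := hR2
    have hqpl : q ∈ (N.erasePlace p).places := Finset.mem_erase.mpr ⟨hqp, hqP⟩
    have hkey : Multiset.map f (m₁' q)
          + (if (q, a.1) ∈ N.arcPT then ({Net.tokOf (N.α p) a.2} : Multiset (ℕ → ℕ)) else 0)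
        = Multiset.map f (m' q)
          + (if (a.1, q) ∈ N.arcTP then ({Net.tokOf (N.α p) a.2} : Multiset (ℕ → ℕ)) else 0) := by
      have heqq := heq q hqpl
      have e1 : ((q, a.1) ∈ (N.erasePlace p).arcPT) = ((q, a.1) ∈ N.arcPT) := by
        simp [Net.erasePlace, hqp]
      have e2 : ((a.1, q) ∈ (N.erasePlace p).arcTP) = ((a.1, q) ∈ N.arcTP) := by
        simp [Net.erasePlace, hqp]
      simp only [e1, e2] at heqq
      have h0 := congrArg (Multiset.map f) heqq
      simp only [Multiset.map_add, apply_ite (Multiset.map f), Multiset.map_singleton,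
        Multiset.map_zero] at h0
      rw [show f (Net.tokOf ((N.erasePlace p).α q) a.2) = Net.tokOf (N.α p) a.2 from
        tok_tok hsub a.2] at h0
      exact h0
    refine ⟨fun r => if r = p then Multiset.map f (m₁' q) else m₁' r, ?_, ?_, ?_, ?_⟩
    · refine ⟨ht', hinj, ?_, ?_, ?_, ?_⟩
      · intro l hl
        rw [← var_eq N p q hminor ht'] at hl
        rw [← newvar_eq N p q hminor ht', idsOf_eq N p q hminor hR1 hR2]
        exact hfresh l hl
      · intro r hr
        have hrp := Finset.mem_filter.mp hr
        by_cases hrpp : r = p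
        · have harc : (p, a.1) ∈ N.arcPT := by rw [← hrpp]; exact hrp.2
          have hqpre : q ∈ (N.erasePlace p).preT a.1 := by
            rw [preT_erase]
            exact Finset.mem_erase.mpr ⟨hqp, Finset.mem_filter.mpr ⟨hqP, hPT.mp harc⟩⟩
          rw [hrpp, hmpq]
          rw [show Net.tokOf (N.α p) a.2 = f (Net.tokOf (N.α q) a.2) from (tok_tok hsub a.2).symm]
          exact Multiset.mem_map_of_mem f (hen q hqpre)
        · have hmem : r ∈ (N.erasePlace p).preT a.1 := by
            rw [preT_erase]
            exact Finset.mem_erase.mpr ⟨hrpp, hr⟩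
          have h3 := hen r hmem
          rw [← hR1 r hrpp] at h3
          exact h3
      · intro r hrN
        by_cases hrpp : r = p
        · simp only [if_pos hrpp]
          rw [hrpp]
          simp only [hPT, hTP]
          rw [hmpq]
          exact hkey
        · simp only [if_neg hrpp]
          have hrpl : r ∈ (N.erasePlace p).places := Finset.mem_erase.mpr ⟨hrpp, hrN⟩
          have heqr := heq r hrpl
          have e1 : ((r, a.1) ∈ (N.erasePlace p).arcPT) = ((r, a.1) ∈ N.arcPT) := by
            simp [Net.erasePlace, hrpp]
          have e2 : ((a.1, r) ∈ (N.erasePlace p).arcTP) = ((a.1, r) ∈ N.arcTP) := by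
            simp [Net.erasePlace, hrpp]
          simp only [e1, e2] at heqr
          rw [← hR1 r hrpp] at heqr
          exact heqr
      · intro r hrN
        have hrpp : r ≠ p := fun h => hrN (h ▸ hpP)
        simp only [if_neg hrpp]
        have hrno : r ∉ (N.erasePlace p).places := fun hc => hrN (Finset.mem_of_mem_erase hc)
        rw [hout r hrno, ← hR1 r hrpp]
    · intro r hrp
      simp only [if_neg hrp]
    · simp
    · simp
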